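/- arXiv:1605.03141 — 7 statements merged into one kernel-verified Lean document; each statement's English description precedes it below -/
import Mathlib

section
/- Let G be a finite connected simple graph, let S = (v_1, ..., v_ℓ) be a k-resolving set for G of size ℓ (with k ≥ 1), and set r = ⌊(k−1)/2⌋. Let u be a vertex of G with codeword u = (d_G(u,v_1), ..., d_G(u,v_ℓ)), let x = (x_1, ..., x_ℓ) be a word, and let I be a subset of {1, ..., ℓ} of size ℓ − r. If x_i = d_G(u, v_i) for every i ∈ I (i.e., x contains no errors in the positions indexed by I), then the intersection ∩_{i ∈ I} G_{x_i}(v_i) equals the singleton {u}. -/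
/-- `v : Fin ℓ → V` is a `k`-resolving set (as an ordered tuple) for `G`: any two distinct
vertices have lists of distances to the entries of `v` differing in at least `k` positions. -/
def IsKResolvingTuple {V : Type*} {ℓ : ℕ} (G : SimpleGraph V) (k : ℕ) (v : Fin ℓ → V) : Prop :=
  ∀ u w : V, u ≠ w →
    k ≤ (Finset.univ.filter (fun i : Fin ℓ => G.dist u (v i) ≠ G.dist w (v i))).card

/-- If the received word `x` contains no errors in the positions indexed by `I`
(a set of `ℓ - r` positions, where `r = ⌊(k-1)/2⌋`), then the intersection of the
distance-spheres `G_{x_i}(v_i)` over `i ∈ I` is exactly `{u}`. -/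
theorem no_errors_intersection_eq_singleton
    {V : Type*} [Fintype V] (G : SimpleGraph V) (hG : G.Connected)
    {ℓ k : ℕ} (hk : 1 ≤ k) (v : Fin ℓ → V) (hres : IsKResolvingTuple G k v)
    (r : ℕ) (hr : r = (k - 1) / 2)
    (u : V) (x : Fin ℓ → ℕ) (I : Finset (Fin ℓ)) (hI : I.card = ℓ - r)
    (hx : ∀ i ∈ I, x i = G.dist u (v i)) :
    (⋂ i ∈ I, {w : V | G.dist w (v i) = x i}) = {u} := by
  ext w
  simp only [Set.mem_iInter, Set.mem_setOf_eq, Set.mem_singleton_iff]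
  constructor
  · intro hw
    by_contra hne
    have hdiff : ∀ i ∈ I, G.dist u (v i) = G.dist w (v i) := by
      intro i hi
      rw [← hx i hi, hw i hi]
    have hsub : (Finset.univ.filter (fun i : Fin ℓ => G.dist u (v i) ≠ G.dist w (v i))) ⊆ Iᶜ := by
      intro i hi
      simp only [Finset.mem_filter, Finset.mem_univ, true_and] at hi
      simp only [Finset.mem_compl]
      intro hiI
      exact hi (hdiff i hiI)
    have hcard : (Finset.univ.filter (fun i : Fin ℓ => G.dist u (v i) ≠ G.dist w (v i))).card ≤ r := by
      calc _ ≤ Iᶜ.card := Finset.card_le_card hsub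
        _ = ℓ - I.card := by simp [Finset.card_compl]
        _ = ℓ - (ℓ - r) := by rw [hI]
        _ ≤ r := by omega
    have hk' := hres u w (fun h => hne h.symm)
    have : k ≤ r := hk'.trans hcard
    have : r < k := by
      rw [hr]
      calc (k - 1) / 2 ≤ k - 1 := Nat.div_le_self _ _
        _ < k := Nat.sub_lt hk one_pos
    omega
  · intro h
    subst h
    intro i hi
    exact (hx i hi).symm
end

section
/- Let G be a finite connected simple graph, let S = (v_1, ..., v_ℓ) be a k-resolving set for G of size ℓ (with k ≥ 1), and set r = ⌊(k−1)/2⌋. Let u be a vertex of G, let x = (x_1, ..., x_ℓ) be a word whose Hamming distance from the codeword of u is at most r, and let I be a subset of {1, ..., ℓ} of size ℓ − r. If x_i ≠ d_G(u, v_i) for some i ∈ I (i.e., x contains an error in a position indexed by I), then the intersection ∩_{i ∈ I} G_{x_i}(v_i) is empty. -/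
/-- If the received word `x` is within Hamming distance `r = ⌊(k-1)/2⌋` of the codeword of `u`,
but contains an error in one of the positions indexed by `I` (a set of `ℓ - r` positions),
then the intersection of the distance-spheres `G_{x_i}(v_i)` over `i ∈ I` is empty. -/
theorem error_in_positions_intersection_eq_empty
    {V : Type*} [Fintype V] (G : SimpleGraph V) (hG : G.Connected)
    {ℓ k : ℕ} (hk : 1 ≤ k) (v : Fin ℓ → V) (hres : IsKResolvingTuple G k v)
    (r : ℕ) (hr : r = (k - 1) / 2)
    (u : V) (x : Fin ℓ → ℕ)
    (hham : (Finset.univ.filter (fun i : Fin ℓ => x i ≠ G.dist u (v i))).card ≤ r)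
    (I : Finset (Fin ℓ)) (hI : I.card = ℓ - r)
    (hx : ∃ i ∈ I, x i ≠ G.dist u (v i)) :
    (⋂ i ∈ I, {w : V | G.dist w (v i) = x i}) = ∅ := by
  ext w
  simp only [Set.mem_iInter, Set.mem_setOf_eq, Set.mem_empty_iff_false, iff_false]
  intro hw
  by_cases huw : w = u
  · obtain ⟨i, hiI, hne⟩ := hx
    exact hne (by rw [← hw i hiI, huw])
  · have hk' := hres u w (Ne.symm huw)
    have hsub : (Finset.univ.filter fun i : Fin ℓ => G.dist u (v i) ≠ G.dist w (v i)) ⊆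
        Iᶜ ∪ (Finset.univ.filter fun i : Fin ℓ => x i ≠ G.dist u (v i)) := by
      intro i hi
      simp only [Finset.mem_filter, Finset.mem_univ, true_and] at hi
      by_cases hiI : i ∈ I
      · refine Finset.mem_union_right _ ?_
        simp only [Finset.mem_filter, Finset.mem_univ, true_and]
        rw [← hw i hiI]
        exact fun h => hi h.symm
      · exact Finset.mem_union_left _ (Finset.mem_compl.mpr hiI)
    have hcard := (Finset.card_le_card hsub).trans (Finset.card_union_le _ _)
    have hcc : Iᶜ.card = ℓ - I.card := by
      rw [Finset.card_compl, Fintype.card_fin]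
    omega
end

section
/- Let G be a finite connected simple graph, let S = (v_1, ..., v_ℓ) be a k-resolving set for G (with k ≥ 1), set r = ⌊(k−1)/2⌋, and let r' ≤ r. Let 𝒰 be an (ℓ, ℓ−r, r')-uncovering. If u is a vertex of G and x = (x_1, ..., x_ℓ) is a word whose Hamming distance from the codeword of u is at most r', then: (a) there exists I ∈ 𝒰 such that ∩_{i ∈ I} G_{x_i}(v_i) = {u}; and (b) for every I ∈ 𝒰, the intersection ∩_{i ∈ I} G_{x_i}(v_i) is either empty or equal to {u}. -/
/-- An `(ℓ, ℓ - r, r')`-uncovering: a collection of `(ℓ - r)`-subsets of the `ℓ` positions such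
that every `r'`-subset of positions is disjoint from at least one member of the collection. -/
def IsUncovering (ℓ r r' : ℕ) (𝒰 : Finset (Finset (Fin ℓ))) : Prop :=
  (∀ I ∈ 𝒰, I.card = ℓ - r) ∧
    ∀ T : Finset (Fin ℓ), T.card = r' → ∃ I ∈ 𝒰, Disjoint T I

/-- Decoding with an uncovering: if the received word `x` is within Hamming distance `r' ≤ r`
of the codeword of the vertex `u`, then (a) for some member `I` of the uncovering the
intersection of the spheres `G_{x_i}(v_i)` over `i ∈ I` is exactly `{u}`, and (b) for every
member `I` of the uncovering, this intersection is either empty or equal to `{u}`. -/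
theorem uncovering_decoding
    {V : Type*} [Fintype V] (G : SimpleGraph V) (hG : G.Connected)
    {ℓ k : ℕ} (hk : 1 ≤ k) (v : Fin ℓ → V) (hres : IsKResolvingTuple G k v)
    (r : ℕ) (hr : r = (k - 1) / 2) (r' : ℕ) (hr' : r' ≤ r) (hr'ℓ : r' ≤ ℓ - r)
    (𝒰 : Finset (Finset (Fin ℓ))) (h𝒰 : IsUncovering ℓ r r' 𝒰)
    (u : V) (x : Fin ℓ → ℕ)
    (hham : (Finset.univ.filter (fun i : Fin ℓ => x i ≠ G.dist u (v i))).card ≤ r') :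
    (∃ I ∈ 𝒰, (⋂ i ∈ I, {w : V | G.dist w (v i) = x i}) = {u}) ∧
      ∀ I ∈ 𝒰, (⋂ i ∈ I, {w : V | G.dist w (v i) = x i}) = ∅ ∨
        (⋂ i ∈ I, {w : V | G.dist w (v i) = x i}) = {u} := by
  obtain ⟨hcard, hcov⟩ := h𝒰
  -- key: any element of the intersection over a member of the uncovering equals u
  have key : ∀ I ∈ 𝒰, ∀ w : V, w ∈ (⋂ i ∈ I, {w : V | G.dist w (v i) = x i}) → w = u := by
    intro I hI w hw
    by_contra hne
    have hwI : ∀ i ∈ I, G.dist w (v i) = x i := by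
      intro i hi
      simpa using Set.mem_iInter₂.mp hw i hi
    have hres' := hres u w (Ne.symm hne)
    have hsub : (Finset.univ.filter (fun i : Fin ℓ => G.dist u (v i) ≠ G.dist w (v i)))
        ⊆ (Finset.univ.filter (fun i : Fin ℓ => x i ≠ G.dist u (v i))) ∪ Iᶜ := by
      intro i hi
      simp only [Finset.mem_filter, Finset.mem_univ, true_and] at hi
      rw [Finset.mem_union]
      by_cases hiI : i ∈ I
      · left
        simp only [Finset.mem_filter, Finset.mem_univ, true_and]
        intro h
        exact hi (by rw [← h, hwI i hiI])
      · right
        simpa using hiI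
    have hc1 := Finset.card_le_card hsub
    have hc2 := Finset.card_union_le
      (Finset.univ.filter (fun i : Fin ℓ => x i ≠ G.dist u (v i))) (Iᶜ : Finset (Fin ℓ))
    have hc3 : (Iᶜ : Finset (Fin ℓ)).card = ℓ - I.card := by
      rw [Finset.card_compl, Fintype.card_fin]
    have hc4 : I.card = ℓ - r := hcard I hI
    omega
  have hpartb : ∀ I ∈ 𝒰, (⋂ i ∈ I, {w : V | G.dist w (v i) = x i}) = ∅ ∨
      (⋂ i ∈ I, {w : V | G.dist w (v i) = x i}) = {u} := by
    intro I hI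
    rcases Set.eq_empty_or_nonempty (⋂ i ∈ I, {w : V | G.dist w (v i) = x i}) with h | h
    · exact Or.inl h
    · right
      obtain ⟨w, hw⟩ := h
      have hwu := key I hI w hw
      subst hwu
      apply Set.eq_singleton_iff_unique_mem.mpr
      exact ⟨hw, fun y hy => key I hI y hy⟩
  refine ⟨?_, hpartb⟩
  -- part (a)
  obtain ⟨T, hT0T, _, hTcard⟩ := Finset.exists_subsuperset_card_eq
    (Finset.subset_univ (Finset.univ.filter (fun i : Fin ℓ => x i ≠ G.dist u (v i))))
    hham (by rw [Finset.card_univ, Fintype.card_fin]; omega)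
  obtain ⟨I, hI, hdisj⟩ := hcov T hTcard
  refine ⟨I, hI, ?_⟩
  have hu : u ∈ ⋂ i ∈ I, {w : V | G.dist w (v i) = x i} := by
    apply Set.mem_iInter₂.mpr
    intro i hi
    have hiT : i ∉ T := Finset.disjoint_right.mp hdisj hi
    have : ¬ (x i ≠ G.dist u (v i)) := by
      intro h
      exact hiT (hT0T (by simp [h]))
    simpa using (not_not.mp this).symm
  apply Set.eq_singleton_iff_unique_mem.mpr
  exact ⟨hu, fun y hy => key I hI y hy⟩
end

section
/- Let a ≥ 1 and b ≥ 0 be fixed integers and let τ ≥ 1 be a fixed integer. Then there exists κ_0 such that for every κ ≥ κ_0 there is an (aκ+b, κ, τ)-covering design with at most C(aτ+1, τ) blocks (a number depending only on a and τ). -/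
/-- A `(ν, κ, τ)`-covering design: a collection of `κ`-subsets (blocks) of a `ν`-set such that
every `τ`-subset is contained in at least one block. -/
def IsCoveringDesign (ν κ τ : ℕ) (B : Finset (Finset (Fin ν))) : Prop :=
  (∀ b ∈ B, b.card = κ) ∧ ∀ T : Finset (Fin ν), T.card = τ → ∃ b ∈ B, T ⊆ b

/-!
Cut the `ν = aκ + b` points into `n = aτ + 1` parts of at most `p = ⌊ν / n⌋ + 1` points each.
Once `κ ≥ τ (b + aτ + 1)`, any `τ` parts together have at most `τ p ≤ κ` points, so they fit
inside a single `κ`-set; one such block for each `τ`-set of parts covers every `τ`-set of points,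
since a `τ`-set of points meets at most `τ` parts. This uses `C(n, τ)` blocks.
-/

open Finset

section Partition

variable {α ι : Type*} [Fintype α] [DecidableEq ι]

lemma card_filter_mem_le_mul [DecidableEq α] (π : α → ι) {p : ℕ}
    (hπ : ∀ i, #{x | π x = i} ≤ p) (S : Finset ι) : #{x | π x ∈ S} ≤ #S * p := by
  calc #{x | π x ∈ S}
      ≤ #(S.biUnion fun i => ({x | π x = i} : Finset α)) :=
        card_le_card fun x hx => mem_biUnion.2 ⟨π x, (mem_filter.1 hx).2, by simp⟩
    _ ≤ ∑ i ∈ S, #{x | π x = i} := card_biUnion_le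
    _ ≤ #S * p := sum_le_card_nsmul _ _ _ fun i _ => hπ i

theorem exists_coveringDesign_of_fiber_card_le [Fintype ι] {ν κ τ p : ℕ} (π : Fin ν → ι)
    (hπ : ∀ i, #{x | π x = i} ≤ p) (hp : τ * p ≤ κ) (hκ : κ ≤ ν)
    (hτ : τ ≤ Fintype.card ι) :
    ∃ B, IsCoveringDesign ν κ τ B ∧ #B ≤ (Fintype.card ι).choose τ := by
  have hblock : ∀ S : Finset ι, #S = τ →
      ∃ b : Finset (Fin ν), ({x | π x ∈ S} : Finset (Fin ν)) ⊆ b ∧ #b = κ := by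
    intro S hS
    have hcard : #{x | π x ∈ S} ≤ κ := (card_filter_mem_le_mul π hπ S).trans (hS ▸ hp)
    obtain ⟨b, hsub, -, hb⟩ :=
      exists_subsuperset_card_eq (subset_univ _) hcard (by simpa using hκ)
    exact ⟨b, hsub, hb⟩
  choose! block hblock_sub hblock_card using hblock
  refine ⟨(powersetCard τ univ).image block, ⟨?_, ?_⟩, ?_⟩
  · simp only [mem_image, mem_powersetCard, subset_univ, true_and]
    rintro _ ⟨S, hS, rfl⟩
    exact hblock_card S hS
  · intro T hT
    have hparts : #(T.image π) ≤ τ := hT ▸ card_image_le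
    obtain ⟨S, hTS, -, hS⟩ :=
      exists_subsuperset_card_eq (subset_univ _) hparts (by simpa using hτ)
    refine ⟨block S, mem_image_of_mem _ (mem_powersetCard.2 ⟨subset_univ S, hS⟩), ?_⟩
    have hT_sub : T ⊆ ({x | π x ∈ S} : Finset (Fin ν)) := fun x hx =>
      mem_filter.2 ⟨mem_univ x, hTS (mem_image_of_mem π hx)⟩
    exact hT_sub.trans (hblock_sub S hS)
  · calc #((powersetCard τ univ).image block) ≤ #(powersetCard τ (univ : Finset ι)) :=
          card_image_le
      _ = (Fintype.card ι).choose τ := by rw [card_powersetCard, card_univ]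

end Partition

lemma exists_fin_map_fiber_card_le {ν n p : ℕ} (h : ν ≤ n * p) :
    ∃ π : Fin ν → Fin n, ∀ i, #{x | π x = i} ≤ p := by
  let e : Fin ν → Fin n × Fin p := fun x => finProdFinEquiv.symm (Fin.castLE h x)
  have he : Function.Injective e :=
    finProdFinEquiv.symm.injective.comp (Fin.castLE_injective h)
  refine ⟨fun x => (e x).1, fun i => ?_⟩
  calc #{x | (e x).1 = i} ≤ #(univ : Finset (Fin p)) :=
        card_le_card_of_injOn (fun x => (e x).2) (fun _ _ => mem_coe.2 (mem_univ _))
          fun x hx y hy hxy =>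
            he (Prod.ext ((mem_filter.1 hx).2.trans (mem_filter.1 hy).2.symm) hxy)
    _ = p := by simp

theorem exists_coveringDesign_const_size_general
    (a b τ : ℕ) (ha : 1 ≤ a) :
    ∃ κ₀ : ℕ, ∀ κ : ℕ, κ₀ ≤ κ →
      ∃ B : Finset (Finset (Fin (a * κ + b))),
        IsCoveringDesign (a * κ + b) κ τ B ∧ B.card ≤ (a * τ + 1).choose τ := by
  refine ⟨τ * (b + a * τ + 1), fun κ hκ => ?_⟩
  have hn : 0 < a * τ + 1 := Nat.succ_pos _
  set p := (a * κ + b) / (a * τ + 1) + 1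
  obtain ⟨π, hπ⟩ := exists_fin_map_fiber_card_le (Nat.lt_mul_div_succ (a * κ + b) hn).le
  have hp : τ * p ≤ κ := by
    refine Nat.le_of_mul_le_mul_right ?_ hn
    calc τ * p * (a * τ + 1)
        = τ * ((a * κ + b) / (a * τ + 1) * (a * τ + 1)) + τ * (a * τ + 1) := by ring
      _ ≤ τ * (a * κ + b) + τ * (a * τ + 1) := by
          gcongr; exact Nat.div_mul_le_self _ _
      _ ≤ κ * (a * τ + 1) := by nlinarith
  simpa using exists_coveringDesign_of_fiber_card_le π hπ hp (by nlinarith) (by simp; nlinarith)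

/-- For fixed constants `a ≥ 1`, `b ≥ 0` and `τ ≥ 1`, for all sufficiently large `κ` there is an
`(aκ + b, κ, τ)`-covering design with at most `(aτ+1).choose τ` blocks, a bound depending only
on `a` and `τ`. -/
theorem exists_coveringDesign_const_size
    (a b τ : ℕ) (ha : 1 ≤ a) (hτ : 1 ≤ τ) :
    ∃ κ₀ : ℕ, ∀ κ : ℕ, κ₀ ≤ κ →
      ∃ B : Finset (Finset (Fin (a * κ + b))),
        IsCoveringDesign (a * κ + b) κ τ B ∧ B.card ≤ (a * τ + 1).choose τ :=
  exists_coveringDesign_const_size_general a b τ ha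
end

section
/- A finite connected simple graph G (with at least two vertices) is k-metric dimensional if and only if k = min over all pairs of distinct vertices x, y of G of |D(x,y)|, where D(x,y) = {z ∈ V(G) : d_G(x,z) ≠ d_G(y,z)} is the set of distinctive vertices of x and y. -/
/-- A finset `S` of vertices is a `k`-resolving set for `G`: any two distinct vertices `u, w`
have different distances to at least `k` vertices of `S`. -/
def IsKResolvingSet {V : Type*} [DecidableEq V] (G : SimpleGraph V) (k : ℕ) (S : Finset V) : Prop :=
  ∀ u w : V, u ≠ w → k ≤ (S.filter (fun v => G.dist u v ≠ G.dist w v)).card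

/-- A finite connected graph on at least two vertices is `k`-metric dimensional (i.e. `k` is the
largest integer for which a `k`-resolving set exists) if and only if `k` is the minimum, over all
pairs of distinct vertices `x, y`, of the number of distinctive vertices of `x` and `y`. -/
theorem kMetricDimensional_iff_min_distinctive
    {V : Type*} [Fintype V] [DecidableEq V] (G : SimpleGraph V)
    (hG : G.Connected) (hV : Nontrivial V) (k : ℕ) :
    ((∃ S : Finset V, IsKResolvingSet G k S) ∧
        ¬ ∃ S : Finset V, IsKResolvingSet G (k + 1) S) ↔
      k = sInf {m : ℕ | ∃ x y : V, x ≠ y ∧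
        (Finset.univ.filter (fun z => G.dist x z ≠ G.dist y z)).card = m} := by
  set T : Set ℕ := {m : ℕ | ∃ x y : V, x ≠ y ∧
      (Finset.univ.filter (fun z => G.dist x z ≠ G.dist y z)).card = m} with hT
  obtain ⟨a, b, hab⟩ := hV
  have hTne : T.Nonempty := ⟨_, a, b, hab, rfl⟩
  obtain ⟨x, y, hxy, hcard⟩ := Nat.sInf_mem hTne
  constructor
  · rintro ⟨⟨S, hS⟩, hno⟩
    have hle : k ≤ sInf T := by
      calc k ≤ (S.filter (fun v => G.dist x v ≠ G.dist y v)).card := hS x y hxy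
        _ ≤ (Finset.univ.filter (fun v => G.dist x v ≠ G.dist y v)).card :=
          Finset.card_le_card (Finset.filter_subset_filter _ (Finset.subset_univ S))
        _ = sInf T := hcard
    refine le_antisymm hle ?_
    by_contra h
    push_neg at h
    exact hno ⟨Finset.univ, fun u w huw =>
      le_trans h (Nat.sInf_le ⟨u, w, huw, rfl⟩)⟩
  · rintro rfl
    refine ⟨⟨Finset.univ, fun u w huw => Nat.sInf_le ⟨u, w, huw, rfl⟩⟩, ?_⟩
    rintro ⟨S, hS⟩
    have := calc sInf T + 1 ≤ (S.filter (fun v => G.dist x v ≠ G.dist y v)).card := hS x y hxy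
      _ ≤ (Finset.univ.filter (fun v => G.dist x v ≠ G.dist y v)).card :=
        Finset.card_le_card (Finset.filter_subset_filter _ (Finset.subset_univ S))
      _ = sInf T := hcard
    omega
end

section
/- For any integers s, t ≥ 2, the grid graph G = P_s □ P_t is (s+t−2)-metric dimensional; that is, G has an (s+t−2)-resolving set but no (s+t−1)-resolving set. -/
open SimpleGraph Finset

section

variable {V : Type*} [DecidableEq V] {G : SimpleGraph V} {k : ℕ} {S T : Finset V}

lemma IsKResolvingSet.mono (hS : IsKResolvingSet G k S) (hST : S ⊆ T) :
    IsKResolvingSet G k T :=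
  fun u w huw => (hS u w huw).trans (card_le_card (filter_subset_filter _ hST))

end

namespace SimpleGraph

lemma Preconnected.dist_boxProd {α β : Type*} {G : SimpleGraph α} {H : SimpleGraph β}
    (hG : G.Preconnected) (hH : H.Preconnected) (x y : α × β) :
    (G □ H).dist x y = G.dist x.1 y.1 + H.dist x.2 y.2 := by
  have h := ((hG.boxProd hH) x y).coe_dist_eq_edist
  rw [edist_boxProd, ← (hG x.1 y.1).coe_dist_eq_edist, ← (hH x.2 y.2).coe_dist_eq_edist] at h
  exact_mod_cast h

lemma dist_le_length_pathGraph {n : ℕ} {i j : Fin n} (w : (pathGraph n).Walk i j) :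
    Nat.dist i j ≤ w.length := by
  induction w with
  | nil => simp
  | cons h _ ih =>
    rw [Walk.length_cons]
    rcases pathGraph_adj.1 h with h | h <;> unfold Nat.dist at * <;> omega

lemma edist_pathGraph_le {n : ℕ} (i j : Fin n) : (pathGraph n).edist i j ≤ Nat.dist i j := by
  wlog hij : i ≤ j generalizing i j
  · rw [edist_comm, Nat.dist_comm]
    exact this j i (le_of_not_ge hij)
  obtain ⟨k, hk⟩ : ∃ k, j.val = i.val + k := ⟨j - i, by omega⟩
  rw [show Nat.dist i j = k by unfold Nat.dist; omega]
  clear hij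
  induction k generalizing j with
  | zero => simp [Fin.ext hk]
  | succ k ih =>
    let j' : Fin n := ⟨i + k, by omega⟩
    have hadj : (pathGraph n).Adj j' j := pathGraph_adj.2 (Or.inl (by simp [j']; omega))
    calc (pathGraph n).edist i j ≤ (pathGraph n).edist i j' + (pathGraph n).edist j' j :=
          SimpleGraph.edist_triangle
      _ ≤ k + 1 := add_le_add (ih j' rfl) (edist_eq_one_iff_adj.2 hadj).le
      _ = (k + 1 : ℕ) := by push_cast; rfl

lemma dist_pathGraph {n : ℕ} (i j : Fin n) : (pathGraph n).dist i j = Nat.dist i j := by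
  obtain ⟨w, hw⟩ := (pathGraph_preconnected n i j).exists_walk_length_eq_dist
  refine le_antisymm ?_ (hw ▸ dist_le_length_pathGraph w)
  have := (pathGraph_preconnected n i j).coe_dist_eq_edist ▸ edist_pathGraph_le i j
  exact_mod_cast this

end SimpleGraph

def distGap {n : ℕ} (a c x : Fin n) : ℤ := (Nat.dist a x : ℤ) - Nat.dist c x

section Path

variable {n : ℕ} (a c : Fin n)

lemma distGap_left : distGap a c a = -Nat.dist a c := by
  simp [distGap, Nat.dist_comm]

lemma distGap_right : distGap a c c = Nat.dist a c := by
  simp [distGap]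

lemma card_distGap_eq_le_one {k : ℤ} (hk : |k| < Nat.dist a c) :
    #{x | distGap a c x = k} ≤ 1 := by
  refine card_le_one.2 fun x hx y hy => ?_
  rw [mem_filter_univ] at hx hy
  rw [abs_lt] at hk
  unfold distGap Nat.dist at *
  omega

lemma card_distGap_eq_add_card_distGap_eq_neg_le (hac : a ≠ c) :
    #{x | distGap a c x = Nat.dist a c} + #{x | distGap a c x = -Nat.dist a c} ≤ n := by
  have := Nat.dist_pos_of_ne (Fin.val_ne_of_ne hac)
  rw [← card_union_of_disjoint (disjoint_filter.2 fun x _ h => by omega)]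
  exact (card_le_univ _).trans_eq (Fintype.card_fin n)

lemma one_le_card_distGap_ne (hac : a ≠ c) (k : ℤ) : 1 ≤ #{x | distGap a c x ≠ k} := by
  have hne : distGap a c a ≠ distGap a c c := by
    rw [distGap_left, distGap_right]
    have := Nat.dist_pos_of_ne (Fin.val_ne_of_ne hac)
    omega
  by_cases hk : distGap a c a = k
  · exact card_pos.2 ⟨c, (mem_filter_univ _).2 (hk ▸ hne.symm)⟩
  · exact card_pos.2 ⟨a, (mem_filter_univ _).2 hk⟩

end Path

lemma card_filter_prod_eq_sum {α β : Type*} [Fintype α] [Fintype β] (p : α × β → Prop)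
    [DecidablePred p] : #{v | p v} = ∑ y, #{x | p (x, y)} := by
  simp only [card_filter, Fintype.sum_prod_type_right]

lemma sum_add_card_compl_le_sum {ι : Type*} [Fintype ι] [DecidableEq ι] {f : ι → ℕ}
    (hf : ∀ i, 1 ≤ f i) (T : Finset ι) : ∑ i ∈ T, f i + #Tᶜ ≤ ∑ i, f i := by
  rw [← sum_add_sum_compl T f, add_le_add_iff_left]
  simpa using card_nsmul_le_sum Tᶜ f 1 fun i _ => hf i

section Grid

variable {s t : ℕ}

lemma add_sub_two_le_card_distGap_ne_of_le {u w : Fin s × Fin t} (huw : u ≠ w)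
    (hle : Nat.dist u.2 w.2 ≤ Nat.dist u.1 w.1) :
    s + t - 2 ≤ #{v : Fin s × Fin t | distGap u.1 w.1 v.1 + distGap u.2 w.2 v.2 ≠ 0} := by
  obtain ⟨a, b⟩ := u
  obtain ⟨c, e⟩ := w
  dsimp only at hle ⊢
  have hac : a ≠ c := by
    rintro rfl
    have : b = e := Fin.ext (Nat.eq_of_dist_eq_zero (by simpa using hle))
    exact huw (by rw [this])
  set r : Fin t → ℕ := fun y => #{x | distGap a c x ≠ -distGap b e y}
  have hsum : #{v : Fin s × Fin t | distGap a c v.1 + distGap b e v.2 ≠ 0} = ∑ y, r y := by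
    rw [card_filter_prod_eq_sum]
    congr! 3 with y _ x
    dsimp only
    omega
  have hr : ∀ y, 1 ≤ r y := fun y => one_le_card_distGap_ne a c hac _
  have hrow : ∀ k, r k + #{x | distGap a c x = -distGap b e k} = s := fun k => by
    rw [add_comm, card_filter_add_card_filter_not, card_univ, Fintype.card_fin]
  rw [hsum]
  rcases hle.lt_or_eq with hlt | heq
  · have hb : s - 1 ≤ r b := by
      have := card_distGap_eq_le_one a c (k := -distGap b e b) (by rw [distGap_left]; simpa)
      have := hrow b
      omega
    have := sum_add_card_compl_le_sum hr {b}
    rw [sum_singleton, card_compl, card_singleton, Fintype.card_fin] at this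
    omega
  · have hbe : b ≠ e := by
      rintro rfl
      exact hac (Fin.ext (Nat.eq_of_dist_eq_zero (by simpa using heq.symm)))
    have hbe' : s ≤ r b + r e := by
      have hb := hrow b
      have he := hrow e
      rw [distGap_left, neg_neg, heq] at hb
      rw [distGap_right, heq] at he
      have := card_distGap_eq_add_card_distGap_eq_neg_le a c hac
      omega
    have := sum_add_card_compl_le_sum hr {b, e}
    rw [sum_pair hbe, card_compl, card_pair hbe, Fintype.card_fin] at this
    omega

lemma add_sub_two_le_card_distGap_ne {u w : Fin s × Fin t} (huw : u ≠ w) :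
    s + t - 2 ≤ #{v : Fin s × Fin t | distGap u.1 w.1 v.1 + distGap u.2 w.2 v.2 ≠ 0} := by
  rcases le_total (Nat.dist u.2 w.2) (Nat.dist u.1 w.1) with hle | hle
  · exact add_sub_two_le_card_distGap_ne_of_le huw hle
  · have hswap := add_sub_two_le_card_distGap_ne_of_le (u := u.swap) (w := w.swap)
      (by simpa using huw) hle
    have hcard : #{v : Fin t × Fin s | distGap u.2 w.2 v.1 + distGap u.1 w.1 v.2 ≠ 0}
        = #{v : Fin s × Fin t | distGap u.1 w.1 v.1 + distGap u.2 w.2 v.2 ≠ 0} :=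
      card_equiv (Equiv.prodComm _ _) fun v => by simp [add_comm]
    simp only [Prod.fst_swap, Prod.snd_swap] at hswap
    omega

lemma card_distGap_ne_corner_le (hs : 2 ≤ s) (ht : 2 ≤ t) :
    #{v : Fin s × Fin t |
      distGap ⟨0, by omega⟩ ⟨1, by omega⟩ v.1 + distGap ⟨1, by omega⟩ ⟨0, by omega⟩ v.2 ≠ 0}
      ≤ s + t - 2 := by
  set x₀ : Fin s := ⟨0, by omega⟩
  set y₀ : Fin t := ⟨0, by omega⟩
  calc _ ≤ #({x₀}ᶜ ×ˢ {y₀} ∪ {x₀} ×ˢ {y₀}ᶜ) := by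
        refine card_le_card fun v hv => ?_
        rw [mem_filter_univ] at hv
        simp only [mem_union, mem_product, mem_compl, mem_singleton, Fin.ext_iff]
        unfold distGap Nat.dist at hv
        simp only [x₀, y₀] at hv ⊢
        omega
    _ ≤ s + t - 2 := by
        grw [card_union_le]
        simp only [card_product, card_compl, card_singleton, Fintype.card_fin]
        omega

end Grid

section GridGraph

variable {s t : ℕ}

lemma grid_dist_ne_dist_iff (u w v : Fin s × Fin t) :
    (pathGraph s □ pathGraph t).dist u v ≠ (pathGraph s □ pathGraph t).dist w v ↔
      distGap u.1 w.1 v.1 + distGap u.2 w.2 v.2 ≠ 0 := by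
  simp only [(pathGraph_preconnected s).dist_boxProd (pathGraph_preconnected t), dist_pathGraph,
    distGap]
  omega

lemma isKResolvingSet_univ_grid :
    IsKResolvingSet (pathGraph s □ pathGraph t) (s + t - 2) univ := fun u w huw => by
  simpa only [grid_dist_ne_dist_iff] using add_sub_two_le_card_distGap_ne huw

lemma not_isKResolvingSet_grid (hs : 2 ≤ s) (ht : 2 ≤ t) (S : Finset (Fin s × Fin t)) :
    ¬ IsKResolvingSet (pathGraph s □ pathGraph t) (s + t - 1) S := fun hS => by
  have hcorner := (hS.mono (subset_univ S)) (⟨0, by omega⟩, ⟨1, by omega⟩)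
    (⟨1, by omega⟩, ⟨0, by omega⟩) (by simp [Prod.ext_iff])
  simp only [grid_dist_ne_dist_iff] at hcorner
  have := card_distGap_ne_corner_le hs ht
  omega

end GridGraph

/-- For `s, t ≥ 2`, the grid graph `P_s □ P_t` is `(s + t - 2)`-metric dimensional: it has an
`(s + t - 2)`-resolving set but no `(s + t - 1)`-resolving set. -/
theorem grid_is_kMetricDimensional (s t : ℕ) (hs : 2 ≤ s) (ht : 2 ≤ t) :
    (∃ S : Finset (Fin s × Fin t),
        IsKResolvingSet ((SimpleGraph.pathGraph s).boxProd (SimpleGraph.pathGraph t))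
          (s + t - 2) S) ∧
      ¬ ∃ S : Finset (Fin s × Fin t),
        IsKResolvingSet ((SimpleGraph.pathGraph s).boxProd (SimpleGraph.pathGraph t))
          (s + t - 1) S :=
  ⟨⟨univ, isKResolvingSet_univ_grid⟩, fun ⟨S, hS⟩ => not_isKResolvingSet_grid hs ht S hS⟩
end

section
/- Let C_n be the cycle graph on n vertices with n odd, n ≥ 3. Then C_n has a k-resolving set if and only if k ≤ n − 1, and for every integer k with 1 ≤ k ≤ n − 1 the k-metric dimension of C_n equals k + 1. -/
open SimpleGraph Finset
open scoped Fin.CommRing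

section KResolving

variable {V : Type*} [DecidableEq V] {G : SimpleGraph V} {k : ℕ} {S : Finset V}

theorem isKResolvingSet_of_add_one_le_card
    (hG : ∀ u w, u ≠ w → {v | G.dist u v = G.dist w v}.Subsingleton) (hk : k + 1 ≤ S.card) :
    IsKResolvingSet G k S := by
  intro u w huw
  have hunresolved : (S.filter fun v => ¬G.dist u v ≠ G.dist w v).card ≤ 1 :=
    card_le_one.mpr fun a ha b hb => hG u w huw (by simpa using (mem_filter.mp ha).2)
      (by simpa using (mem_filter.mp hb).2)
  have := card_filter_add_card_filter_not (s := S) (fun v => G.dist u v ≠ G.dist w v)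
  omega

theorem IsKResolvingSet.le_card_erase (hS : IsKResolvingSet G k S) {u w v : V} (huw : u ≠ w)
    (hv : G.dist u v = G.dist w v) : k ≤ (S.erase v).card :=
  (hS u w huw).trans <| card_le_card fun x hx => by
    rw [mem_filter] at hx
    exact mem_erase.mpr ⟨by rintro rfl; exact hx.2 hv, hx.1⟩

theorem IsKResolvingSet.add_one_le_card [Nonempty V]
    (hG : ∀ v, ∃ u w, u ≠ w ∧ G.dist u v = G.dist w v) (hS : IsKResolvingSet G k S)
    (hk : k ≠ 0) : k + 1 ≤ S.card := by
  have hle_erase : ∀ v, k ≤ (S.erase v).card := fun v => by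
    obtain ⟨u, w, huw, hv⟩ := hG v
    exact hS.le_card_erase huw hv
  obtain ⟨v₀⟩ := ‹Nonempty V›
  obtain ⟨v, hv⟩ : S.Nonempty :=
    card_pos.mp <| (Nat.pos_of_ne_zero hk).trans_le <| (hle_erase v₀).trans card_erase_le
  have := hle_erase v
  rw [card_erase_of_mem hv] at this
  omega

end KResolving

theorem Fin.add_self_injective {n : ℕ} (hn : Odd n) :
    Function.Injective fun v : Fin n => v + v := by
  intro a b hab
  have h := congrArg Fin.val hab
  simp only [Fin.val_add_eq_ite] at h
  obtain ⟨m, rfl⟩ := hn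
  ext
  split_ifs at h <;> omega

theorem Fin.val_sub_eq_ite {n : ℕ} (a b : Fin n) :
    (a - b).val = if b.val ≤ a.val then a.val - b.val else n + a.val - b.val := by
  split_ifs with h
  · exact Fin.coe_sub_iff_le.mpr h
  · exact Fin.coe_sub_iff_lt.mpr (not_le.mp h)

namespace SimpleGraph

theorem cycleGraph_min_val_sub_le_length {n : ℕ} {u v : Fin n} (p : (cycleGraph n).Walk u v) :
    min (v - u).val (u - v).val ≤ p.length := by
  induction p with
  | nil => simp [Fin.val_sub_eq_ite]
  | @cons a b c hab p ih =>
    rw [cycleGraph_adj'] at hab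
    simp only [Fin.val_sub_eq_ite, Walk.length_cons] at hab ih ⊢
    have := a.isLt; have := b.isLt; have := c.isLt
    split_ifs at hab ih ⊢ <;> omega

variable {n : ℕ} [NeZero n]

theorem cycleGraph_exists_walk_add_natCast (hn : 1 < n) (u : Fin n) (k : ℕ) :
    ∃ p : (cycleGraph n).Walk u (u + k), p.length = k := by
  induction k with
  | zero => exact ⟨Walk.nil.copy rfl (by simp), by simp⟩
  | succ k ih =>
    obtain ⟨p, hp⟩ := ih
    have hadj : (cycleGraph n).Adj (u + k) (u + (k + 1 : ℕ)) := by
      rw [cycleGraph_adj']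
      right
      simpa [Nat.cast_succ, ← add_assoc] using Nat.mod_eq_of_lt hn
    exact ⟨p.concat hadj, by simp [hp]⟩

theorem cycleGraph_dist_le_val_sub (u v : Fin n) : (cycleGraph n).dist u v ≤ (v - u).val := by
  rcases eq_or_ne u v with rfl | huv
  · simp
  have hn : 1 < n := by
    have := u.isLt; have := v.isLt; have := Fin.val_ne_of_ne huv; omega
  obtain ⟨p, hp⟩ := cycleGraph_exists_walk_add_natCast hn u (v - u).val
  calc (cycleGraph n).dist u v
      ≤ (p.copy rfl (by rw [Fin.cast_val_eq_self, add_sub_cancel])).length := dist_le _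
    _ = (v - u).val := by simp [hp]

theorem cycleGraph_dist (u v : Fin n) :
    (cycleGraph n).dist u v = min (v - u).val (u - v).val := by
  refine le_antisymm (le_min (cycleGraph_dist_le_val_sub u v) ?_) ?_
  · exact dist_comm (G := cycleGraph n) ▸ cycleGraph_dist_le_val_sub v u
  · obtain ⟨p, hp⟩ := (cycleGraph_preconnected u v).exists_walk_length_eq_dist
    exact hp ▸ cycleGraph_min_val_sub_le_length p

theorem cycleGraph_add_eq_add_self_of_dist_eq {u w v : Fin n} (huw : u ≠ w)
    (h : (cycleGraph n).dist u v = (cycleGraph n).dist w v) : u + w = v + v := by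
  rw [dist_comm, cycleGraph_dist, dist_comm, cycleGraph_dist] at h
  rcases min_choice (u - v).val (v - u).val with h₁ | h₁ <;>
    rcases min_choice (w - v).val (v - w).val with h₂ | h₂ <;>
    rw [h₁, h₂, ← Fin.ext_iff] at h
  · exact absurd (sub_left_injective h) huw
  · linear_combination h
  · linear_combination -h
  · exact absurd (sub_right_injective h) huw

theorem cycleGraph_equidistant_subsingleton (hn : Odd n) {u w : Fin n} (huw : u ≠ w) :
    {v | (cycleGraph n).dist u v = (cycleGraph n).dist w v}.Subsingleton :=
  fun _ hv₁ _ hv₂ => Fin.add_self_injective hn <|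
    (cycleGraph_add_eq_add_self_of_dist_eq huw hv₁).symm.trans
      (cycleGraph_add_eq_add_self_of_dist_eq huw hv₂)

theorem cycleGraph_dist_add_one_eq_dist_sub_one (v : Fin n) :
    (cycleGraph n).dist (v + 1) v = (cycleGraph n).dist (v - 1) v := by
  simp only [cycleGraph_dist, sub_add_cancel_left, add_sub_cancel_left, sub_sub_cancel,
    sub_sub_cancel_left, min_comm]

theorem cycleGraph_exists_equidistant (hn : 2 < n) (v : Fin n) :
    ∃ u w, u ≠ w ∧ (cycleGraph n).dist u v = (cycleGraph n).dist w v := by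
  refine ⟨v + 1, v - 1, fun h => ?_, cycleGraph_dist_add_one_eq_dist_sub_one v⟩
  have h := congrArg Fin.val h
  rw [Fin.val_add_eq_ite, Fin.val_sub_eq_ite, Fin.val_one', Nat.mod_eq_of_lt (by omega)] at h
  have := v.isLt
  split_ifs at h <;> omega

end SimpleGraph

/-- The odd cycle `C_n` (`n ≥ 3`, `n` odd) has a `k`-resolving set if and only if `k ≤ n - 1`,
and for `1 ≤ k ≤ n - 1` its `k`-metric dimension (least size of a `k`-resolving set) is `k + 1`. -/
theorem oddCycle_kMetricDimension (n : ℕ) (hn : 3 ≤ n) (hodd : Odd n) :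
    (∀ k : ℕ, (∃ S : Finset (Fin n), IsKResolvingSet (SimpleGraph.cycleGraph n) k S) ↔
      k ≤ n - 1) ∧
    ∀ k : ℕ, 1 ≤ k → k ≤ n - 1 →
      sInf {m : ℕ | ∃ S : Finset (Fin n),
        IsKResolvingSet (SimpleGraph.cycleGraph n) k S ∧ S.card = m} = k + 1 := by
  have : NeZero n := ⟨by omega⟩
  have hsep := fun (u w : Fin n) (huw : u ≠ w) => cycleGraph_equidistant_subsingleton hodd huw
  have hequi := cycleGraph_exists_equidistant (n := n) hn
  refine ⟨fun k => ⟨?_, fun hk => ⟨univ, isKResolvingSet_of_add_one_le_card hsep ?_⟩⟩,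
    fun k hk hkn => IsLeast.csInf_eq ⟨?_, ?_⟩⟩
  · rintro ⟨S, hS⟩
    rcases eq_or_ne k 0 with rfl | hk
    · exact Nat.zero_le _
    · have := hS.add_one_le_card hequi hk
      have := card_le_univ S
      rw [Fintype.card_fin] at this
      omega
  · rw [card_univ, Fintype.card_fin]; omega
  · obtain ⟨S, -, hS⟩ := exists_subset_card_eq (s := (univ : Finset (Fin n))) (n := k + 1)
      (by rw [card_univ, Fintype.card_fin]; omega)
    exact ⟨S, isKResolvingSet_of_add_one_le_card hsep hS.ge, hS⟩
  · rintro m ⟨S, hS, rfl⟩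
    exact hS.add_one_le_card hequi (by omega)
end
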